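/- The pair (ℚ ⋊ ℚ₊*, P ⋊ ℕ×) is not a quasi-lattice ordered group: there exist two elements of P ⋊ ℕ× with a common upper bound in P ⋊ ℕ× but no least common upper bound. -/

import Mathlib

def Pset : Set ℕ := {n | n = 0 ∨ 2 ≤ n}

def valid (p : ℕ × ℕ) : Prop := p.1 ∈ Pset ∧ 0 < p.2

def smul' (p q : ℕ × ℕ) : ℕ × ℕ := (p.1 + p.2 * q.1, p.2 * q.2)

/-- g ≤ h iff g⁻¹h ∈ P ⋊ ℕ×, i.e. h = g·x for some x ∈ P ⋊ ℕ× -/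
def le' (p q : ℕ × ℕ) : Prop := ∃ r : ℕ × ℕ, valid r ∧ q = smul' p r

/-!
On the translations `(a, 1)` the order reads `a ≤ c ↔ c - a ∈ P`, and since `1 ∉ P` both
`5 = 2 + 3` and `6 = 2 + 4 = 3 + 3` are minimal common upper bounds of `2` and `3`, while no
translation lies below both of them and above `2` and `3`. A least upper bound below `(5, 1)`
must itself be a translation, so none exists.
-/

lemma valid_mk_one {a : ℕ} (ha : 2 ≤ a) : valid (a, 1) := ⟨Or.inr ha, one_pos⟩

lemma snd_eq_one_of_le'_mk_one {u : ℕ × ℕ} {c : ℕ} (h : le' u (c, 1)) : u.2 = 1 := by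
  obtain ⟨r, -, hr⟩ := h
  exact Nat.eq_one_of_mul_eq_one_right (congrArg Prod.snd hr).symm

lemma le'_mk_one_iff {a c : ℕ} : le' (a, 1) (c, 1) ↔ c = a ∨ a + 2 ≤ c := by
  constructor
  · rintro ⟨⟨b, m⟩, ⟨hb, -⟩, hr⟩
    simp only [smul', one_mul, Prod.mk.injEq] at hr
    rcases hb with hb | hb <;> simp only at hb <;> omega
  · rintro (rfl | hc)
    · exact ⟨(0, 1), ⟨Or.inl rfl, one_pos⟩, by simp [smul']⟩
    · exact ⟨(c - a, 1), valid_mk_one (by omega), by simp only [smul']; ext <;> simp; omega⟩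

lemma le'_mk_one_add (a : ℕ) {b : ℕ} (hb : 2 ≤ b) : le' (a, 1) (a + b, 1) :=
  le'_mk_one_iff.2 (Or.inr (by omega))

/-- (ℚ ⋊ ℚ₊*, P ⋊ ℕ×) is not quasi-lattice ordered: there are two elements of
P ⋊ ℕ× with a common upper bound in P ⋊ ℕ× but no least common upper bound. -/
theorem stmt12 :
    ∃ x y : ℕ × ℕ, valid x ∧ valid y ∧
      (∃ u : ℕ × ℕ, valid u ∧ le' x u ∧ le' y u) ∧
      ¬ ∃ u : ℕ × ℕ, valid u ∧ le' x u ∧ le' y u ∧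
        ∀ w : ℕ × ℕ, valid w → le' x w → le' y w → le' u w := by
  have h5 : valid (5, 1) ∧ le' (2, 1) (5, 1) ∧ le' (3, 1) (5, 1) :=
    ⟨valid_mk_one (by norm_num), le'_mk_one_add 2 (b := 3) (by norm_num),
      le'_mk_one_add 3 (b := 2) le_rfl⟩
  have h6 : valid (6, 1) ∧ le' (2, 1) (6, 1) ∧ le' (3, 1) (6, 1) :=
    ⟨valid_mk_one (by norm_num), le'_mk_one_add 2 (b := 4) (by norm_num),
      le'_mk_one_add 3 (b := 3) (by norm_num)⟩
  refine ⟨(2, 1), (3, 1), valid_mk_one le_rfl, valid_mk_one (by norm_num), ⟨(5, 1), h5⟩, ?_⟩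
  rintro ⟨⟨n, k⟩, -, hxu, hyu, hleast⟩
  have hu5 := hleast (5, 1) h5.1 h5.2.1 h5.2.2
  have hu6 := hleast (6, 1) h6.1 h6.2.1 h6.2.2
  obtain rfl : k = 1 := snd_eq_one_of_le'_mk_one hu5
  rw [le'_mk_one_iff] at hxu hyu hu5 hu6
  omega
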